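/- Let Γ ⊆ Sym({1,…,n}) be a permutation group, let d be even, and let v, v̄ ∈ S_d(Γ) be irreducible. Then v and v̄ are deformation equivalent if and only if their representations are positively isomorphic. -/

import Mathlib

open Matrix

/-- The matrix of an arrangement of `n` points in `ℝ^d`: the `i`-th row is the point `v i`. -/
def arrMat {n d : ℕ} (v : Fin n → Fin d → ℝ) : Matrix (Fin n) (Fin d) ℝ := Matrix.of v

/-- An arrangement is normalized if `MᵀM` is the identity matrix. -/
def IsNormalized {n d : ℕ} (v : Fin n → Fin d → ℝ) : Prop :=
  (arrMat v)ᵀ * arrMat v = 1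

/-- The arrangement space of `v`: the column span of its matrix, a subspace of `ℝ^n`. -/
def arrSpace {n d : ℕ} (v : Fin n → Fin d → ℝ) : Submodule ℝ (Fin n → ℝ) :=
  Submodule.span ℝ (Set.range (arrMat v)ᵀ)

/-- `detPair v w = det (M_wᵀ * M_v)`, i.e. `det(v, w̄) = det(M̄ᵀ M)` with `w` playing `v̄`. -/
noncomputable def detPair {n d : ℕ} (v w : Fin n → Fin d → ℝ) : ℝ :=
  ((arrMat w)ᵀ * arrMat v).det

/-- Two subspaces `U, W ⊆ ℝ^n` are orthogonal if `⟨u, w⟩ = 0` for all `u ∈ U`, `w ∈ W`. -/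
def OrthSpaces {n : ℕ} (U W : Submodule ℝ (Fin n → ℝ)) : Prop :=
  ∀ u ∈ U, ∀ w ∈ W, u ⬝ᵥ w = 0

/-- Arrangements are equivalent if related by an invertible linear map `X`. -/
def AreEquivalent {n d : ℕ} (v w : Fin n → Fin d → ℝ) : Prop :=
  ∃ X : Matrix (Fin d) (Fin d) ℝ, X.det ≠ 0 ∧ ∀ i, X.mulVec (v i) = w i

/-- Arrangements are positively equivalent if related by a linear map of positive determinant. -/
def PosEquivalent {n d : ℕ} (v w : Fin n → Fin d → ℝ) : Prop :=
  ∃ X : Matrix (Fin d) (Fin d) ℝ, 0 < X.det ∧ ∀ i, X.mulVec (v i) = w i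

/-- `T : Γ → O(ℝ^d)` is a representation: orthogonal values and multiplicative. -/
def IsRep {n d : ℕ} (Γ : Subgroup (Equiv.Perm (Fin n)))
    (T : Γ → Matrix (Fin d) (Fin d) ℝ) : Prop :=
  (∀ φ, (T φ)ᵀ * T φ = 1) ∧ (∀ φ ψ, T (φ * ψ) = T φ * T ψ)

/-- `T` is a representation of the arrangement `v`: `T_φ v_i = v_{φ(i)}`. -/
def IsRepOf {n d : ℕ} (Γ : Subgroup (Equiv.Perm (Fin n)))
    (T : Γ → Matrix (Fin d) (Fin d) ℝ) (v : Fin n → Fin d → ℝ) : Prop :=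
  IsRep Γ T ∧ ∀ (φ : Γ) (i : Fin n), (T φ).mulVec (v i) = v (φ.val i)

/-- `v` is a `Γ`-arrangement if it has a representation. -/
def IsGammaArr {n d : ℕ} (Γ : Subgroup (Equiv.Perm (Fin n)))
    (v : Fin n → Fin d → ℝ) : Prop :=
  ∃ T : Γ → Matrix (Fin d) (Fin d) ℝ, IsRepOf Γ T v

/-- A representation is irreducible if the only invariant subspaces of `ℝ^d` are `⊥` and `⊤`. -/
def IrredRep {n d : ℕ} (Γ : Subgroup (Equiv.Perm (Fin n)))
    (T : Γ → Matrix (Fin d) (Fin d) ℝ) : Prop :=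
  ∀ W : Submodule ℝ (Fin d → ℝ), (∀ (φ : Γ), ∀ x ∈ W, (T φ).mulVec x ∈ W) → W = ⊥ ∨ W = ⊤

/-- Representations are isomorphic: an invertible equivariant map exists. -/
def IsoReps {n d : ℕ} (Γ : Subgroup (Equiv.Perm (Fin n)))
    (T T' : Γ → Matrix (Fin d) (Fin d) ℝ) : Prop :=
  ∃ R : Matrix (Fin d) (Fin d) ℝ, R.det ≠ 0 ∧ ∀ φ, R * T φ = T' φ * R

/-- Representations are positively isomorphic: an equivariant map with positive determinant. -/
def PosIsoReps {n d : ℕ} (Γ : Subgroup (Equiv.Perm (Fin n)))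
    (T T' : Γ → Matrix (Fin d) (Fin d) ℝ) : Prop :=
  ∃ R : Matrix (Fin d) (Fin d) ℝ, 0 < R.det ∧ ∀ φ, R * T φ = T' φ * R

/-- `S_d(Γ)`: the set of normalized `Γ`-arrangements of `n` points in `ℝ^d`. -/
def SdSet (n d : ℕ) (Γ : Subgroup (Equiv.Perm (Fin n))) : Set (Fin n → Fin d → ℝ) :=
  {v | IsNormalized v ∧ IsGammaArr Γ v}

/-- Deformation equivalence: a continuous path in `S_d(Γ)` from `v` to `w`. -/
def DeformEquiv {n d : ℕ} (Γ : Subgroup (Equiv.Perm (Fin n)))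
    (v w : Fin n → Fin d → ℝ) : Prop :=
  ∃ c : ℝ → (Fin n → Fin d → ℝ), ContinuousOn c (Set.Icc 0 1) ∧
    (∀ t ∈ Set.Icc (0:ℝ) 1, c t ∈ SdSet n d Γ) ∧ c 0 = v ∧ c 1 = w

/-- `v` is flexible if it can be deformed into some non-equivalent arrangement. -/
def Flexible {n d : ℕ} (Γ : Subgroup (Equiv.Perm (Fin n))) (v : Fin n → Fin d → ℝ) : Prop :=
  ∃ w : Fin n → Fin d → ℝ, DeformEquiv Γ v w ∧ ¬ AreEquivalent v w

/-- A subspace `W ⊆ ℝ^n` is `Γ`-invariant (under the permutation action). -/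
def GammaInvariant {n : ℕ} (Γ : Subgroup (Equiv.Perm (Fin n)))
    (W : Submodule ℝ (Fin n → ℝ)) : Prop :=
  ∀ (φ : Γ), ∀ x ∈ W, (fun i => x (φ.val⁻¹ i)) ∈ W

/-!
Along a deformation `v(t)`, the matrix `M_{v(t)}ᵀ M_{v(t₀)}` intertwines the representations of
`v(t₀)` and `v(t)`, and its determinant is close to `det (M_{v(t₀)}ᵀ M_{v(t₀)}) = 1` for `t` near
`t₀`; so positive isomorphism of the representations is locally constant in `t`, hence constant.

Conversely, by Schur's lemma `RᵀR` is scalar for a positive isomorphism `R : T → T'`, so `R`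
rescales to an equivariant rotation `Q ∈ SO(d)`, and `Qᵀ v̄` is a normalized arrangement with the
same irreducible representation `T` as `v`. For two such arrangements `v, x` Schur's lemma also
makes `M_vᵀ M_x + M_xᵀ M_v` scalar, so every point of the segment from `v` to `x` has a scalar
Gram matrix and the normalized segment is a deformation, unless the segment passes through `0`,
i.e. `x = -v`; then `v` is rotated into `-v`, as `-1 ∈ SO(d)` for even `d`. Finally `SO(d)` is
path connected: it consists of products of an even number of reflections, and `H_u H_{u'}` is
joined to `H_u H_u = 1` by moving `u'` to `u` in `ℝ^d ∖ {0}`.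
-/

lemma transpose_mul_self_eq_zero {m ι : Type*} [Fintype m] {A : Matrix m ι ℝ} :
    Aᵀ * A = 0 ↔ A = 0 := by
  simpa using conjTranspose_mul_self_eq_zero (A := A)

lemma nonneg_of_transpose_mul_self_eq_smul_one {m ι : Type*} [Fintype m] [DecidableEq ι]
    [Nonempty ι] {A : Matrix m ι ℝ} {c : ℝ} (h : Aᵀ * A = c • 1) : 0 ≤ c := by
  obtain ⟨i⟩ := ‹Nonempty ι›
  have hi := congrFun (congrFun h i) i
  simp only [mul_apply, transpose_apply, Matrix.smul_apply, one_apply_eq, smul_eq_mul,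
    mul_one] at hi
  exact hi ▸ Finset.sum_nonneg fun j _ => mul_self_nonneg (A j i)

lemma joinedIn_of_continuousOn_Icc {X : Type*} [TopologicalSpace X] {F : Set X} {c : ℝ → X}
    (hc : ContinuousOn c (Set.Icc 0 1)) (hF : ∀ t ∈ Set.Icc (0 : ℝ) 1, c t ∈ F) :
    JoinedIn F (c 0) (c 1) :=
  ⟨⟨⟨fun t => c t, hc.domRestrict⟩, rfl, rfl⟩, fun t => hF t t.2⟩

section Householder

variable {ι : Type*} [Fintype ι] [DecidableEq ι]

/-- The reflection in the hyperplane `uᗮ`; `householder 0 = 1`, as `2 / 0 = 0`. -/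
noncomputable def householder (u : ι → ℝ) : Matrix ι ι ℝ := 1 - (2 / (u ⬝ᵥ u)) • vecMulVec u u

lemma householder_zero : householder (0 : ι → ℝ) = 1 := by simp [householder]

lemma transpose_householder (u : ι → ℝ) : (householder u)ᵀ = householder u := by
  simp [householder]

lemma householder_mul_self (u : ι → ℝ) : householder u * householder u = 1 := by
  rcases eq_or_ne u 0 with rfl | hu
  · rw [householder_zero, Matrix.one_mul]
  have hq : u ⬝ᵥ u ≠ 0 := by simpa using hu
  simp only [householder, Matrix.sub_mul, Matrix.mul_sub, Matrix.one_mul, Matrix.mul_one,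
    Matrix.smul_mul, Matrix.mul_smul, vecMulVec_mul_vecMulVec, vecMulVec_smul, smul_smul]
  match_scalars
  · rfl
  · field_simp
    ring

lemma householder_mem_orthogonalGroup (u : ι → ℝ) : householder u ∈ orthogonalGroup ι ℝ :=
  (mem_orthogonalGroup_iff' ι ℝ).mpr (by rw [transpose_householder, householder_mul_self])

lemma det_householder {u : ι → ℝ} (hu : u ≠ 0) : (householder u).det = -1 := by
  have hq : u ⬝ᵥ u ≠ 0 := by simpa using hu
  have h : householder u = 1 + replicateCol Unit (-(2 / (u ⬝ᵥ u)) • u) * replicateRow Unit u := by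
    rw [← vecMulVec_eq, householder, smul_vecMulVec, neg_smul, sub_eq_add_neg]
  rw [h, det_one_add_replicateCol_mul_replicateRow, dotProduct_smul, smul_eq_mul]
  field_simp
  ring

lemma householder_mulVec (u x : ι → ℝ) :
    householder u *ᵥ x = (Submodule.reflection (ℝ ∙ WithLp.toLp 2 u)ᗮ (WithLp.toLp 2 x)).ofLp := by
  rw [Submodule.reflection_orthogonal_apply, Submodule.reflection_singleton_apply]
  simp only [RCLike.ofReal_real_eq_id, id_eq, ← real_inner_self_eq_norm_sq,
    EuclideanSpace.inner_eq_star_dotProduct, householder, sub_mulVec, one_mulVec, smul_mulVec,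
    vecMulVec_mulVec]
  ext i
  simp [dotProduct_comm x u]
  ring

lemma continuousOn_householder : ContinuousOn (householder (ι := ι)) {0}ᶜ := by
  have h : ∀ u ∈ ({0}ᶜ : Set (ι → ℝ)), u ⬝ᵥ u ≠ 0 := fun u hu => by simpa using hu
  unfold householder
  fun_prop (disch := exact h)

lemma joinedIn_orthogonalGroup_mul {X Y : Matrix ι ι ℝ}
    (hX : JoinedIn (orthogonalGroup ι ℝ) 1 X) (hY : JoinedIn (orthogonalGroup ι ℝ) 1 Y) :
    JoinedIn (orthogonalGroup ι ℝ) 1 (X * Y) := by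
  simpa [Submonoid.coe_mul_self_eq] using hX.mul hY

lemma det_pos_of_joinedIn_one {Q : Matrix ι ι ℝ} (h : JoinedIn (orthogonalGroup ι ℝ) 1 Q) :
    0 < Q.det := by
  obtain ⟨γ, hγ⟩ := h
  by_contra! hQ
  obtain ⟨t, ht⟩ := intermediate_value_univ 1 0 γ.continuous.matrix_det
    ⟨by simpa using hQ, by simp⟩
  exact (isUnit_det_of_left_inverse ((mem_orthogonalGroup_iff' ι ℝ).mp (hγ t))).ne_zero ht

lemma joinedIn_householder_mul_householder (hι : 1 < Fintype.card ι) {u u' : ι → ℝ}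
    (hu : u ≠ 0) (hu' : u' ≠ 0) :
    JoinedIn (orthogonalGroup ι ℝ) 1 (householder u * householder u') := by
  have hrank : 1 < Module.rank ℝ (ι → ℝ) := by rw [rank_fun']; exact_mod_cast hι
  have h := ((isPathConnected_compl_singleton_of_one_lt_rank hrank 0).joinedIn u hu u'
    hu').map_continuousOn (f := fun y => householder u * householder y)
    (continuousOn_const.mul continuousOn_householder)
  rw [householder_mul_self] at h
  refine h.mono (Set.image_subset_iff.2 fun y _ => ?_)
  exact mul_mem (householder_mem_orthogonalGroup u) (householder_mem_orthogonalGroup y)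

lemma joinedIn_or_forall_householder_mul (hι : 1 < Fintype.card ι) (l : List (ι → ℝ)) :
    JoinedIn (orthogonalGroup ι ℝ) 1 (l.map householder).prod ∨
      ∀ u ≠ 0, JoinedIn (orthogonalGroup ι ℝ) 1 (householder u * (l.map householder).prod) := by
  induction l with
  | nil => exact Or.inl (by simpa using JoinedIn.refl (one_mem (orthogonalGroup ι ℝ)))
  | cons a l ih =>
    rw [List.map_cons, List.prod_cons]
    rcases eq_or_ne a 0 with rfl | ha
    · simpa [householder_zero] using ih
    rcases ih with h | h
    · refine Or.inr fun u hu => ?_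
      rw [← Matrix.mul_assoc]
      exact joinedIn_orthogonalGroup_mul (joinedIn_householder_mul_householder hι hu ha) h
    · exact Or.inl (h a ha)

lemma exists_eq_prod_householder {Q : Matrix ι ι ℝ} (hQ : Q ∈ orthogonalGroup ι ℝ) :
    ∃ l : List (ι → ℝ), Q = (l.map householder).prod := by
  let e := Unitary.linearIsometryEquiv ⟨toEuclideanCLM (n := ι) (𝕜 := ℝ) Q, Unitary.map_mem _ hQ⟩
  obtain ⟨l, -, hl⟩ := e.reflections_generate_dim
  have key : ∀ (m : List (EuclideanSpace ℝ ι)) (x : EuclideanSpace ℝ ι),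
      ((m.map fun v => Submodule.reflection (ℝ ∙ v)ᗮ).prod x).ofLp =
        ((m.map WithLp.ofLp).map householder).prod *ᵥ x.ofLp := by
    intro m x
    induction m with
    | nil => simp
    | cons v m ih =>
      simp only [List.map_cons, List.prod_cons, LinearIsometryEquiv.coe_mul, Function.comp_apply,
        ← mulVec_mulVec, ← ih, householder_mulVec]
  refine ⟨l.map WithLp.ofLp, Matrix.toLin'.injective (LinearMap.ext fun x => ?_)⟩
  have hx : Q *ᵥ x = (e (WithLp.toLp 2 x)).ofLp := (ofLp_toEuclideanCLM Q _).symm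
  simpa [hx, hl] using key l (WithLp.toLp 2 x)

theorem joinedIn_one_of_mem_specialOrthogonalGroup (hι : 1 < Fintype.card ι)
    {Q : Matrix ι ι ℝ} (hQ : Q ∈ specialOrthogonalGroup ι ℝ) :
    JoinedIn (orthogonalGroup ι ℝ) 1 Q := by
  obtain ⟨hQo, hQdet⟩ := mem_specialOrthogonalGroup_iff.mp hQ
  obtain ⟨l, rfl⟩ := exists_eq_prod_householder hQo
  refine (joinedIn_or_forall_householder_mul hι l).resolve_right fun h => ?_
  obtain ⟨i⟩ : Nonempty ι := Fintype.card_pos_iff.mp (by omega)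
  have hu : (Pi.single i 1 : ι → ℝ) ≠ 0 := by simp
  have := det_pos_of_joinedIn_one (h _ hu)
  rw [det_mul, det_householder hu, hQdet] at this
  norm_num at this

lemma neg_one_mem_specialOrthogonalGroup (hι : Even (Fintype.card ι)) :
    (-1 : Matrix ι ι ℝ) ∈ specialOrthogonalGroup ι ℝ :=
  mem_specialOrthogonalGroup_iff.mpr
    ⟨(mem_orthogonalGroup_iff' ι ℝ).mpr (by simp), by simp [det_neg, hι.neg_one_pow]⟩

end Householder

section Representations

variable {n d : ℕ} {Γ : Subgroup (Equiv.Perm (Fin n))}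
  {S S' T : Γ → Matrix (Fin d) (Fin d) ℝ} {u u' : Fin n → Fin d → ℝ}

lemma IsRep.mul_transpose (hT : IsRep Γ T) (φ : Γ) : T φ * (T φ)ᵀ = 1 :=
  mul_eq_one_comm.mp (hT.1 φ)

lemma IsRep.map_one (hT : IsRep Γ T) : T 1 = 1 := by
  have h : T 1 = T 1 * T 1 := by simpa using hT.2 1 1
  calc T 1 = T 1 * (T 1 * (T 1)ᵀ) := by rw [hT.mul_transpose, Matrix.mul_one]
    _ = T 1 * (T 1)ᵀ := by rw [← Matrix.mul_assoc, ← h]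
    _ = 1 := hT.mul_transpose 1

lemma IsRep.transpose_eq (hT : IsRep Γ T) (φ : Γ) : (T φ)ᵀ = T φ⁻¹ := by
  have h : T φ⁻¹ * T φ = 1 := by rw [← hT.2, inv_mul_cancel, hT.map_one]
  rw [← Matrix.inv_eq_left_inv (hT.1 φ), Matrix.inv_eq_left_inv h]

lemma IsRepOf.arrMat_mul (hT : IsRepOf Γ T u) (φ : Γ) :
    arrMat u * T φ = arrMat fun i => u (φ.val⁻¹ i) := by
  ext i j
  have h := congrFun (hT.2 φ⁻¹ i) j
  rw [← hT.1.transpose_eq] at h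
  simpa [arrMat, Matrix.mul_apply, Matrix.mulVec, dotProduct, mul_comm] using h

lemma transpose_arrMat_comp_mul (u u' : Fin n → Fin d → ℝ) (σ : Equiv.Perm (Fin n)) :
    (arrMat fun i => u' (σ i))ᵀ * arrMat u = (arrMat u')ᵀ * arrMat fun i => u (σ⁻¹ i) := by
  ext a b
  simp only [Matrix.mul_apply, Matrix.transpose_apply, arrMat, Matrix.of_apply]
  exact Fintype.sum_equiv σ _ _ fun i => by simp

lemma IsRepOf.gram_mul (hS : IsRepOf Γ S u) (hS' : IsRepOf Γ S' u') (φ : Γ) :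
    (arrMat u')ᵀ * arrMat u * S φ = S' φ * ((arrMat u')ᵀ * arrMat u) := by
  have h : S' φ * (arrMat u')ᵀ = (arrMat fun i => u' (φ.val i))ᵀ := by
    rw [← Matrix.transpose_transpose (S' φ), ← Matrix.transpose_mul, hS'.1.transpose_eq,
      hS'.arrMat_mul]
    simp
  rw [Matrix.mul_assoc, hS.arrMat_mul, ← Matrix.mul_assoc, h, transpose_arrMat_comp_mul]

lemma IsRepOf.unique (hu : IsNormalized u) (hS : IsRepOf Γ S u) (hS' : IsRepOf Γ S' u) :
    S = S' := by
  funext φ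
  have h : arrMat u * S φ = arrMat u * S' φ := by rw [hS.arrMat_mul, hS'.arrMat_mul]
  have hu' : (arrMat u)ᵀ * arrMat u = 1 := hu
  rw [← Matrix.one_mul (S φ), ← Matrix.one_mul (S' φ), ← hu', Matrix.mul_assoc, Matrix.mul_assoc,
    h]

end Representations

section Intertwiners

variable {n d : ℕ} {Γ : Subgroup (Equiv.Perm (Fin n))} {T T' T'' : Γ → Matrix (Fin d) (Fin d) ℝ}

lemma PosIsoReps.symm (h : PosIsoReps Γ T T') : PosIsoReps Γ T' T := by
  obtain ⟨R, hR, hRT⟩ := h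
  have hu : IsUnit R.det := hR.ne'.isUnit
  refine ⟨R⁻¹, by simpa [Matrix.det_nonsing_inv, Ring.inverse_eq_inv'] using hR, fun φ => ?_⟩
  calc R⁻¹ * T' φ = R⁻¹ * (T' φ * R) * R⁻¹ := by
        rw [Matrix.mul_assoc, Matrix.mul_assoc, Matrix.mul_nonsing_inv _ hu, Matrix.mul_one]
    _ = T φ * R⁻¹ := by rw [← hRT, ← Matrix.mul_assoc, Matrix.nonsing_inv_mul _ hu, Matrix.one_mul]

lemma PosIsoReps.trans (h : PosIsoReps Γ T T') (h' : PosIsoReps Γ T' T'') :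
    PosIsoReps Γ T T'' := by
  obtain ⟨R, hR, hRT⟩ := h
  obtain ⟨R', hR', hRT'⟩ := h'
  refine ⟨R' * R, by rw [Matrix.det_mul]; positivity, fun φ => ?_⟩
  rw [Matrix.mul_assoc, hRT, ← Matrix.mul_assoc, hRT', Matrix.mul_assoc]

lemma posIsoReps_of_detPair_pos {u u' : Fin n → Fin d → ℝ} (hT : IsRepOf Γ T u)
    (hT' : IsRepOf Γ T' u') (h : 0 < detPair u u') : PosIsoReps Γ T T' :=
  ⟨_, h, hT.gram_mul hT'⟩

lemma IrredRep.eq_smul_one_of_mulVec_eq (hT : IrredRep Γ T) {X : Matrix (Fin d) (Fin d) ℝ}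
    (hX : ∀ φ, X * T φ = T φ * X) {x : Fin d → ℝ} {c : ℝ} (hx : x ≠ 0) (hxc : X *ᵥ x = c • x) :
    X = c • 1 := by
  set W := LinearMap.ker (Matrix.toLin' (X - c • 1))
  have hmem : ∀ y, y ∈ W ↔ X *ᵥ y = c • y := by
    simp [W, sub_eq_zero]
  have hW : ∀ φ, ∀ y ∈ W, T φ *ᵥ y ∈ W := by
    intro φ y hy
    rw [hmem] at hy ⊢
    rw [Matrix.mulVec_mulVec, hX, ← Matrix.mulVec_mulVec, hy, Matrix.mulVec_smul]
  rcases hT W hW with hbot | htop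
  · exact absurd ((Submodule.eq_bot_iff W).mp hbot x ((hmem x).mpr hxc)) hx
  · rwa [← sub_eq_zero, ← Matrix.toLin'.map_eq_zero_iff, ← LinearMap.ker_eq_top]

lemma IrredRep.exists_eq_smul_one_of_isSymm [NeZero d] (hT : IrredRep Γ T)
    {X : Matrix (Fin d) (Fin d) ℝ} (hXs : X.IsSymm) (hX : ∀ φ, X * T φ = T φ * X) :
    ∃ c : ℝ, X = c • 1 := by
  have hH : X.IsHermitian := Matrix.isHermitian_iff_isSymm.mpr hXs
  refine ⟨_, hT.eq_smul_one_of_mulVec_eq hX (x := ⇑(hH.eigenvectorBasis 0)) ?_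
    (hH.mulVec_eigenvectorBasis 0)⟩
  intro h0
  exact (hH.eigenvectorBasis.orthonormal.ne_zero 0) (by ext i; exact congrFun h0 i)

end Intertwiners

section Arrangements

variable {n d : ℕ} {Γ : Subgroup (Equiv.Perm (Fin n))}
  {S T : Γ → Matrix (Fin d) (Fin d) ℝ} {u v x : Fin n → Fin d → ℝ}

lemma deformEquiv_iff_joinedIn {w : Fin n → Fin d → ℝ} :
    DeformEquiv Γ v w ↔ JoinedIn (SdSet n d Γ) v w := by
  constructor
  · rintro ⟨c, hc, hmem, rfl, rfl⟩
    exact joinedIn_of_continuousOn_Icc hc hmem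
  · rintro ⟨γ, hγ⟩
    exact ⟨γ.extend, γ.continuous_extend.continuousOn,
      fun t ht => by rw [γ.extend_apply ht]; exact hγ _, γ.extend_zero, γ.extend_one⟩

lemma arrMat_mulVec (Q : Matrix (Fin d) (Fin d) ℝ) (u : Fin n → Fin d → ℝ) :
    arrMat (fun i => Q *ᵥ u i) = arrMat u * Qᵀ := by
  ext i j
  simp [arrMat, mul_apply, mulVec, dotProduct, mul_comm]

lemma IsNormalized.mulVec (hu : IsNormalized u) {Q : Matrix (Fin d) (Fin d) ℝ}
    (hQ : Q ∈ orthogonalGroup (Fin d) ℝ) : IsNormalized fun i => Q *ᵥ u i := by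
  have hu' : (arrMat u)ᵀ * arrMat u = 1 := hu
  rw [IsNormalized, arrMat_mulVec, transpose_mul, transpose_transpose, Matrix.mul_assoc,
    ← Matrix.mul_assoc (arrMat u)ᵀ, hu', Matrix.one_mul, ← mem_orthogonalGroup_iff]
  exact hQ

lemma IsRepOf.conj (hS : IsRepOf Γ S u) {Q : Matrix (Fin d) (Fin d) ℝ}
    (hQ : Q ∈ orthogonalGroup (Fin d) ℝ) :
    IsRepOf Γ (fun φ => Q * S φ * Qᵀ) fun i => Q *ᵥ u i := by
  have hQ' : Qᵀ * Q = 1 := (mem_orthogonalGroup_iff' _ _).mp hQ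
  refine ⟨⟨fun φ => ?_, fun φ ψ => ?_⟩, fun φ i => ?_⟩
  · rw [transpose_mul, transpose_mul, transpose_transpose]
    calc Q * ((S φ)ᵀ * Qᵀ) * (Q * S φ * Qᵀ) = Q * ((S φ)ᵀ * (Qᵀ * Q) * S φ) * Qᵀ := by
          simp only [Matrix.mul_assoc]
      _ = 1 := by
          rw [hQ', Matrix.mul_one, hS.1.1, Matrix.mul_one, ← mem_orthogonalGroup_iff]
          exact hQ
  · simp only [hS.1.2, Matrix.mul_assoc]
    rw [← Matrix.mul_assoc Qᵀ Q, hQ', Matrix.one_mul]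
  · simp only [mulVec_mulVec, Matrix.mul_assoc, hQ', Matrix.mul_one]
    rw [← mulVec_mulVec, hS.2]

lemma mulVec_mem_SdSet (hu : u ∈ SdSet n d Γ) {Q : Matrix (Fin d) (Fin d) ℝ}
    (hQ : Q ∈ orthogonalGroup (Fin d) ℝ) : (fun i => Q *ᵥ u i) ∈ SdSet n d Γ :=
  ⟨hu.1.mulVec hQ, _, hu.2.choose_spec.conj hQ⟩

lemma joinedIn_mulVec (hd : 1 < d) (hu : u ∈ SdSet n d Γ) {Q : Matrix (Fin d) (Fin d) ℝ}
    (hQ : Q ∈ specialOrthogonalGroup (Fin d) ℝ) :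
    JoinedIn (SdSet n d Γ) u fun i => Q *ᵥ u i := by
  have h := (joinedIn_one_of_mem_specialOrthogonalGroup (by simpa using hd) hQ).map
    (f := fun X i => X *ᵥ u i) (by fun_prop)
  simp only [one_mulVec] at h
  exact h.mono (Set.image_subset_iff.2 fun X hX => mulVec_mem_SdSet hu hX)

lemma IsRepOf.smul_add_smul (hv : IsRepOf Γ T v) (hx : IsRepOf Γ T x) (a b : ℝ) :
    IsRepOf Γ T (a • v + b • x) :=
  ⟨hv.1, fun φ i => by simp [mulVec_add, mulVec_smul, hv.2, hx.2]⟩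

lemma inv_sqrt_smul_mem_SdSet (hu : IsRepOf Γ T u) {k : ℝ} (hk : 0 < k)
    (hgram : (arrMat u)ᵀ * arrMat u = k • 1) : (√k)⁻¹ • u ∈ SdSet n d Γ := by
  refine ⟨?_, T, by simpa using hu.smul_add_smul hu (√k)⁻¹ 0⟩
  have h : arrMat ((√k)⁻¹ • u) = (√k)⁻¹ • arrMat u := rfl
  rw [IsNormalized, h, transpose_smul, Matrix.smul_mul, Matrix.mul_smul, hgram, smul_smul,
    smul_smul, ← mul_inv, Real.mul_self_sqrt hk.le, inv_mul_cancel₀ hk.ne', one_smul]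

lemma gram_smul_add_smul (hv : IsNormalized v) (hx : IsNormalized x) {γ : ℝ}
    (hγ : (arrMat v)ᵀ * arrMat x + (arrMat x)ᵀ * arrMat v = γ • 1) (a b : ℝ) :
    (arrMat (a • v + b • x))ᵀ * arrMat (a • v + b • x) = (a ^ 2 + b ^ 2 + a * b * γ) • 1 := by
  have hv' : (arrMat v)ᵀ * arrMat v = 1 := hv
  have hx' : (arrMat x)ᵀ * arrMat x = 1 := hx
  have h : arrMat (a • v + b • x) = a • arrMat v + b • arrMat x := rfl
  have hγ' : (arrMat x)ᵀ * arrMat v = γ • 1 - (arrMat v)ᵀ * arrMat x := eq_sub_of_add_eq' hγ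
  simp only [h, transpose_add, transpose_smul, Matrix.add_mul, Matrix.mul_add, Matrix.smul_mul,
    Matrix.mul_smul, hv', hx', hγ']
  match_scalars <;> ring

lemma joinedIn_or_eq_neg [NeZero d] (hT : IrredRep Γ T) (hv : IsNormalized v)
    (hx : IsNormalized x) (hTv : IsRepOf Γ T v) (hTx : IsRepOf Γ T x) :
    JoinedIn (SdSet n d Γ) v x ∨ x = -v := by
  obtain ⟨γ, hγ⟩ := hT.exists_eq_smul_one_of_isSymm
    (X := (arrMat v)ᵀ * arrMat x + (arrMat x)ᵀ * arrMat v)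
    (by simp [IsSymm, add_comm]) (fun φ => by
      rw [Matrix.add_mul, Matrix.mul_add, hTv.gram_mul hTx, hTx.gram_mul hTv])
  set k : ℝ → ℝ := fun s => (1 - s) ^ 2 + s ^ 2 + (1 - s) * s * γ
  have hgram (s : ℝ) : (arrMat ((1 - s) • v + s • x))ᵀ * arrMat ((1 - s) • v + s • x) = k s • 1 :=
    gram_smul_add_smul hv hx hγ (1 - s) s
  rcases (nonneg_of_transpose_mul_self_eq_smul_one (hgram (1 / 2))).eq_or_lt with hk0 | hkpos
  · right
    have h0 := hgram (1 / 2)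
    rw [← hk0, zero_smul, transpose_mul_self_eq_zero] at h0
    have h1 : (1 / 2 : ℝ) • (v + x) = 0 := by
      have h0' : (1 - 1 / 2 : ℝ) • v + (1 / 2 : ℝ) • x = 0 := h0
      norm_num at h0'
      rwa [smul_add]
    exact eq_neg_of_add_eq_zero_right ((smul_eq_zero.mp h1).resolve_left (by norm_num))
  · left
    have hpos : ∀ s ∈ Set.Icc (0 : ℝ) 1, 0 < k s := by
      rintro s ⟨hs0, hs1⟩
      have hks : k s = (1 - 2 * s) ^ 2 + 4 * (s * (1 - s)) * k (1 / 2) := by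
        simp only [k]
        ring
      have h4 : 0 ≤ s * (1 - s) := mul_nonneg hs0 (by linarith)
      rw [hks]
      rcases le_total (k (1 / 2)) 1 with h | h <;> nlinarith [sq_nonneg (1 - 2 * s)]
    have hc := joinedIn_of_continuousOn_Icc (c := fun s => (√(k s))⁻¹ • ((1 - s) • v + s • x))
      ((ContinuousOn.inv₀ (by fun_prop) fun s hs => (Real.sqrt_pos.2 (hpos s hs)).ne').smul
        (by fun_prop))
      fun s hs => inv_sqrt_smul_mem_SdSet (hTv.smul_add_smul hTx _ _) (hpos s hs) (hgram s)
    simpa [k] using hc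

lemma PosIsoReps.exists_mem_specialOrthogonalGroup [NeZero d] {T' : Γ → Matrix (Fin d) (Fin d) ℝ}
    (hT : IsRep Γ T) (hT' : IsRep Γ T') (hTirr : IrredRep Γ T) (h : PosIsoReps Γ T T') :
    ∃ Q ∈ specialOrthogonalGroup (Fin d) ℝ, ∀ φ, Q * T φ = T' φ * Q := by
  obtain ⟨R, hR, hRT⟩ := h
  have hRT' (φ : Γ) : Rᵀ * T' φ = T φ * Rᵀ := by
    simpa [hT.transpose_eq, hT'.transpose_eq] using (congrArg transpose (hRT φ⁻¹)).symm
  obtain ⟨c, hc⟩ := hTirr.exists_eq_smul_one_of_isSymm (isSymm_transpose_mul_self R) fun φ => by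
    rw [Matrix.mul_assoc, hRT, ← Matrix.mul_assoc, hRT', Matrix.mul_assoc]
  have hc0 : 0 < c := by
    refine (nonneg_of_transpose_mul_self_eq_smul_one hc).lt_of_ne' fun h0 => hR.ne' ?_
    rw [h0, zero_smul, transpose_mul_self_eq_zero] at hc
    simp [hc]
  set Q := (√c)⁻¹ • R
  have hQ : Q ∈ orthogonalGroup (Fin d) ℝ := by
    rw [mem_orthogonalGroup_iff', transpose_smul, Matrix.smul_mul, Matrix.mul_smul, hc,
      smul_smul, smul_smul, ← mul_inv, Real.mul_self_sqrt hc0.le, inv_mul_cancel₀ hc0.ne',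
      one_smul]
  refine ⟨Q, mem_specialOrthogonalGroup_iff.mpr ⟨hQ, ?_⟩, fun φ => by
    rw [Matrix.smul_mul, hRT, Matrix.mul_smul]⟩
  have hQdet : 0 < Q.det := by
    rw [det_smul]
    positivity
  have hsq : Q.det * Q.det = 1 := by
    simpa using congrArg det ((mem_orthogonalGroup_iff' _ _).mp hQ)
  nlinarith

lemma joinedIn_of_isRepOf (hd : Even d) (hTirr : IrredRep Γ T) (hv : IsNormalized v)
    (hx : IsNormalized x) (hTv : IsRepOf Γ T v) (hTx : IsRepOf Γ T x) :
    JoinedIn (SdSet n d Γ) v x := by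
  have hvS : v ∈ SdSet n d Γ := ⟨hv, T, hTv⟩
  obtain rfl | hd2 : d = 0 ∨ 2 ≤ d := by rcases hd with ⟨r, rfl⟩; omega
  · exact Subsingleton.elim v x ▸ JoinedIn.refl hvS
  have : NeZero d := ⟨by omega⟩
  refine (joinedIn_or_eq_neg hTirr hv hx hTv hTx).elim id fun hxv => ?_
  have hneg : (fun i => (-1 : Matrix (Fin d) (Fin d) ℝ) *ᵥ v i) = x := by
    ext i j
    simp [hxv, neg_mulVec]
  exact hneg ▸ joinedIn_mulVec hd2 hvS (neg_one_mem_specialOrthogonalGroup (by simpa))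

end Arrangements

theorem posIsoReps_of_joinedIn {n d : ℕ} {Γ : Subgroup (Equiv.Perm (Fin n))}
    {T T' : Γ → Matrix (Fin d) (Fin d) ℝ} {v w : Fin n → Fin d → ℝ} (hT : IsRepOf Γ T v)
    (hT' : IsRepOf Γ T' w) (h : JoinedIn (SdSet n d Γ) v w) : PosIsoReps Γ T T' := by
  obtain ⟨γ, hγ⟩ := h
  choose S hS using fun t => (hγ t).2
  have hloc (t : unitInterval) :
      ∀ᶠ s in nhds t, PosIsoReps Γ (S t) (S s) ∧ PosIsoReps Γ (S s) (S t) := by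
    have hcont : Continuous fun s => detPair (γ t) (γ s) := by
      unfold detPair arrMat
      fun_prop
    have h1 : detPair (γ t) (γ t) = 1 := by
      rw [detPair, (hγ t).1, det_one]
    filter_upwards [(hcont.tendsto t).eventually_const_lt (h1 ▸ one_pos)] with s hs
    have hts := posIsoReps_of_detPair_pos (hS t) (hS s) hs
    exact ⟨hts, hts.symm⟩
  have h01 := PreconnectedSpace.induction₂' _ hloc ⟨fun _ _ _ => PosIsoReps.trans⟩ 0 1
  rwa [(hS 0).unique (hγ 0).1 (γ.source ▸ hT), (hS 1).unique (hγ 1).1 (γ.target ▸ hT')] at h01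

theorem joinedIn_of_posIsoReps {n d : ℕ} {Γ : Subgroup (Equiv.Perm (Fin n))}
    {T T' : Γ → Matrix (Fin d) (Fin d) ℝ} {v w : Fin n → Fin d → ℝ} (hd : Even d)
    (hv : IsNormalized v) (hw : IsNormalized w) (hT : IsRepOf Γ T v) (hTirr : IrredRep Γ T)
    (hT' : IsRepOf Γ T' w) (h : PosIsoReps Γ T T') : JoinedIn (SdSet n d Γ) v w := by
  obtain rfl | hd2 : d = 0 ∨ 2 ≤ d := by rcases hd with ⟨r, rfl⟩; omega
  · exact Subsingleton.elim v w ▸ JoinedIn.refl ⟨hv, T, hT⟩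
  have : NeZero d := ⟨by omega⟩
  obtain ⟨Q, hQ, hQT⟩ := h.exists_mem_specialOrthogonalGroup hT.1 hT'.1 hTirr
  have hQo := (mem_specialOrthogonalGroup_iff.mp hQ).1
  have hQt : Qᵀ ∈ orthogonalGroup (Fin d) ℝ := by
    rwa [mem_orthogonalGroup_iff', transpose_transpose, ← mem_orthogonalGroup_iff]
  have hTx : IsRepOf Γ T fun i => Qᵀ *ᵥ w i := by
    convert hT'.conj hQt using 2 with φ
    rw [transpose_transpose, Matrix.mul_assoc, ← hQT, ← Matrix.mul_assoc,
      (mem_orthogonalGroup_iff' _ _).mp hQo, Matrix.one_mul]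
  have hxw : (fun i => Q *ᵥ (Qᵀ *ᵥ w i)) = w := by
    simp [mulVec_mulVec, (mem_orthogonalGroup_iff _ _).mp hQo]
  have hxn := hw.mulVec hQt
  have hrot := joinedIn_mulVec hd2 ⟨hxn, T, hTx⟩ hQ
  rw [hxw] at hrot
  exact (joinedIn_of_isRepOf hd hTirr hv hxn hT hTx).trans hrot

theorem stmt10_general {n d : ℕ} (Γ : Subgroup (Equiv.Perm (Fin n))) (hd : Even d)
    (v w : Fin n → Fin d → ℝ)
    (hv : v ∈ SdSet n d Γ) (hw : w ∈ SdSet n d Γ)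
    (T T' : Γ → Matrix (Fin d) (Fin d) ℝ)
    (hT : IsRepOf Γ T v) (hTirr : IrredRep Γ T)
    (hT' : IsRepOf Γ T' w) :
    DeformEquiv Γ v w ↔ PosIsoReps Γ T T' := by
  rw [deformEquiv_iff_joinedIn]
  exact ⟨posIsoReps_of_joinedIn hT hT', joinedIn_of_posIsoReps hd hv.1 hw.1 hT hTirr hT'⟩

theorem stmt10 {n d : ℕ} (Γ : Subgroup (Equiv.Perm (Fin n))) (hd : Even d)
    (v w : Fin n → Fin d → ℝ)
    (hv : v ∈ SdSet n d Γ) (hw : w ∈ SdSet n d Γ)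
    (T T' : Γ → Matrix (Fin d) (Fin d) ℝ)
    (hT : IsRepOf Γ T v) (hTirr : IrredRep Γ T)
    (hT' : IsRepOf Γ T' w) (hT'irr : IrredRep Γ T') :
    DeformEquiv Γ v w ↔ PosIsoReps Γ T T' :=
  stmt10_general Γ hd v w hv hw T T' hT hTirr hT'
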